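/- arXiv:2505.22618 — 3 statements merged into one kernel-verified Lean document; each statement's English description precedes it below -/
import Mathlib

section
/- Under the high-confidence assumption p_j(x*_j) > 1 - ε for all j with (n+1)ε ≤ 1, greedy parallel decoding equals greedy joint decoding: argmax_z p(z) = argmax_z ∏_j p_j(z_j) = x*, where both maximizers are unique. -/
/-!
Both the joint mass `p x*` (by a union bound over the coordinates where a configuration differs
from `x*`) and the product `∏ j, p_j x*_j` (by the Weierstrass product inequality) are at least
`1 - ∑ j, (1 - p_j x*_j) ≥ 1 - nε ≥ ε`. A configuration `z ≠ x*` differs from `x*` in some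
coordinate `j`, where `p_j (z j) ≤ 1 - p_j x*_j < ε`, and both `p z` and `∏ i, p_i (z i)` are at
most `p_j (z j)`.
-/

open Finset

theorem Finset.one_sub_sum_one_sub_le_prod {ι R : Type*} [CommRing R] [LinearOrder R]
    [IsStrictOrderedRing R] (s : Finset ι) {a : ι → R} (h0 : ∀ i ∈ s, 0 ≤ a i)
    (h1 : ∀ i ∈ s, a i ≤ 1) : 1 - ∑ i ∈ s, (1 - a i) ≤ ∏ i ∈ s, a i := by
  classical
  induction s using Finset.induction_on with
  | empty => simp
  | insert i s hi ih =>
    rw [sum_insert hi, prod_insert hi]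
    have ih := ih (fun j hj => h0 j (mem_insert_of_mem hj)) (fun j hj => h1 j (mem_insert_of_mem hj))
    have hai : 0 ≤ 1 - a i := sub_nonneg.2 (h1 i (mem_insert_self i s))
    have hprod : ∏ j ∈ s, a j ≤ 1 :=
      prod_le_one (fun j hj => h0 j (mem_insert_of_mem hj)) (fun j hj => h1 j (mem_insert_of_mem hj))
    nlinarith [mul_le_mul_of_nonneg_left hprod hai]

section Marginal

variable {ι V : Type*} [Fintype ι] [DecidableEq ι] [Fintype V] [DecidableEq V]

def marginal (p : (ι → V) → ℝ) (j : ι) (v : V) : ℝ := ∑ z with z j = v, p z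

variable {p : (ι → V) → ℝ}

theorem marginal_nonneg (hp0 : ∀ z, 0 ≤ p z) (j : ι) (v : V) : 0 ≤ marginal p j v :=
  sum_nonneg fun z _ => hp0 z

theorem sum_marginal (p : (ι → V) → ℝ) (j : ι) : ∑ v, marginal p j v = ∑ z, p z := by
  unfold marginal
  exact sum_fiberwise univ (· j) p

theorem apply_le_marginal (hp0 : ∀ z, 0 ≤ p z) (z : ι → V) (j : ι) : p z ≤ marginal p j (z j) :=
  single_le_sum (fun w _ => hp0 w) (mem_filter.2 ⟨mem_univ z, rfl⟩)

theorem marginal_le_one (hp0 : ∀ z, 0 ≤ p z) (hp1 : ∑ z, p z = 1) (j : ι) (v : V) :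
    marginal p j v ≤ 1 := by
  rw [← hp1, ← sum_marginal p j]
  exact single_le_sum (fun w _ => marginal_nonneg hp0 j w) (mem_univ v)

theorem marginal_add_marginal_le_one (hp0 : ∀ z, 0 ≤ p z) (hp1 : ∑ z, p z = 1) (j : ι) {u v : V}
    (huv : u ≠ v) : marginal p j u + marginal p j v ≤ 1 := by
  rw [← hp1, ← sum_marginal p j, ← sum_pair huv]
  exact sum_le_univ_sum_of_nonneg (marginal_nonneg hp0 j)

theorem prod_marginal_le_marginal (hp0 : ∀ z, 0 ≤ p z) (hp1 : ∑ z, p z = 1) (z : ι → V)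
    (j : ι) : ∏ i, marginal p i (z i) ≤ marginal p j (z j) := by
  simpa using prod_le_prod_of_subset_of_le_one (subset_univ {j})
    (fun i _ => marginal_nonneg hp0 i (z i)) (fun i _ _ => marginal_le_one hp0 hp1 i (z i))

theorem sum_sub_apply_le_sum_sub_marginal (hp0 : ∀ z, 0 ≤ p z) (x : ι → V) :
    ∑ z, p z - p x ≤ ∑ j, (∑ z, p z - marginal p j (x j)) := by
  have hcover : ∀ z ∈ univ.erase x, p z ≤ ∑ j with z j ≠ x j, p z := fun z hz => by
    obtain ⟨j, hj⟩ := Function.ne_iff.1 (ne_of_mem_erase hz)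
    exact single_le_sum (f := fun _ => p z) (fun _ _ => hp0 z) (mem_filter.2 ⟨mem_univ j, hj⟩)
  have hcompl : ∀ j, ∑ z with z j ≠ x j, p z = ∑ z, p z - marginal p j (x j) := fun j => by
    rw [marginal, ← sum_filter_add_sum_filter_not univ (fun z => z j = x j)]
    ring
  calc ∑ z, p z - p x = ∑ z ∈ univ.erase x, p z := (sum_erase_eq_sub (mem_univ x)).symm
    _ ≤ ∑ z ∈ univ.erase x, ∑ j with z j ≠ x j, p z := sum_le_sum hcover
    _ ≤ ∑ z, ∑ j with z j ≠ x j, p z :=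
      sum_le_univ_sum_of_nonneg fun z => sum_nonneg fun _ _ => hp0 z
    _ = ∑ j, ∑ z with z j ≠ x j, p z := by simp only [sum_filter]; exact sum_comm
    _ = ∑ j, (∑ z, p z - marginal p j (x j)) := sum_congr rfl fun j _ => hcompl j

theorem exists_marginal_lt_of_ne (hp0 : ∀ z, 0 ≤ p z) (hp1 : ∑ z, p z = 1) {x z : ι → V} {ε : ℝ}
    (hconf : ∀ j, 1 - ε < marginal p j (x j)) (hz : z ≠ x) : ∃ j, marginal p j (z j) < ε := by
  obtain ⟨j, hj⟩ := Function.ne_iff.1 hz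
  exact ⟨j, by linarith [marginal_add_marginal_le_one hp0 hp1 j hj, hconf j]⟩

theorem one_sub_sum_le_apply (hp0 : ∀ z, 0 ≤ p z) (hp1 : ∑ z, p z = 1) (x : ι → V) :
    1 - ∑ j, (1 - marginal p j (x j)) ≤ p x := by
  have := sum_sub_apply_le_sum_sub_marginal hp0 x
  rw [hp1] at this
  linarith

theorem one_sub_sum_le_prod_marginal (hp0 : ∀ z, 0 ≤ p z) (hp1 : ∑ z, p z = 1) (x : ι → V) :
    1 - ∑ j, (1 - marginal p j (x j)) ≤ ∏ j, marginal p j (x j) :=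
  one_sub_sum_one_sub_le_prod univ (fun j _ => marginal_nonneg hp0 j (x j))
    (fun j _ => marginal_le_one hp0 hp1 j (x j))

end Marginal

theorem stmt_2_general {V : Type*} [Fintype V] [DecidableEq V] {n : ℕ}
    (p : (Fin n → V) → ℝ) (pm : Fin n → V → ℝ) (x' : Fin n → V) (ε : ℝ)
    (hp0 : ∀ z, 0 ≤ p z) (hp1 : ∑ z : Fin n → V, p z = 1)
    (hm : ∀ j v, pm j v = ∑ z : Fin n → V, if z j = v then p z else 0)
    (hconf : ∀ j, pm j (x' j) > 1 - ε)
    (hεn : ((n : ℝ) + 1) * ε ≤ 1) :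
    (∀ z : Fin n → V, z ≠ x' → p z < p x') ∧
    (∀ z : Fin n → V, z ≠ x' → ∏ j, pm j (z j) < ∏ j, pm j (x' j)) := by
  obtain rfl : pm = marginal p := funext₂ fun j v => by rw [hm, marginal, sum_filter]
  have hgap : ε ≤ 1 - ∑ j, (1 - marginal p j (x' j)) := by
    have : ∑ j, (1 - marginal p j (x' j)) ≤ n * ε := by
      simpa using sum_le_card_nsmul univ _ ε fun j _ => (sub_lt_comm.1 (hconf j)).le
    linarith
  refine ⟨fun z hz => ?_, fun z hz => ?_⟩ <;>
    obtain ⟨j, hj⟩ := exists_marginal_lt_of_ne hp0 hp1 hconf hz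
  · calc p z ≤ marginal p j (z j) := apply_le_marginal hp0 z j
      _ < ε := hj
      _ ≤ _ := hgap
      _ ≤ p x' := one_sub_sum_le_apply hp0 hp1 x'
  · calc ∏ i, marginal p i (z i) ≤ marginal p j (z j) := prod_marginal_le_marginal hp0 hp1 z j
      _ < ε := hj
      _ ≤ _ := hgap
      _ ≤ ∏ i, marginal p i (x' i) := one_sub_sum_le_prod_marginal hp0 hp1 x'

/-- Under high confidence with `(n+1)ε ≤ 1`, greedy parallel decoding
equals greedy joint decoding: `x*` is the unique maximizer of both the joint `p`
and the product of marginals `q(z) = ∏ j, p_j (z j)`. -/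
theorem stmt_2 {V : Type*} [Fintype V] [DecidableEq V] {n : ℕ}
    (p : (Fin n → V) → ℝ) (pm : Fin n → V → ℝ) (x' : Fin n → V) (ε : ℝ)
    (hp0 : ∀ z, 0 ≤ p z) (hp1 : ∑ z : Fin n → V, p z = 1)
    (hm : ∀ j v, pm j v = ∑ z : Fin n → V, if z j = v then p z else 0)
    (hcard : 2 ≤ Fintype.card V)
    (hconf : ∀ j, pm j (x' j) > 1 - ε)
    (hε : 0 < ε) (hεn : ((n : ℝ) + 1) * ε ≤ 1) :
    (∀ z : Fin n → V, z ≠ x' → p z < p x') ∧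
    (∀ z : Fin n → V, z ≠ x' → ∏ j, pm j (z j) < ∏ j, pm j (x' j)) :=
  stmt_2_general p pm x' ε hp0 hp1 hm hconf hεn
end

section
/- The threshold ε ≤ 1/(n+1) in the parallel decoding equivalence theorem is tight: for any ε with 1/(n+1) < ε ≤ 1/2 and any n ≥ 1, there exists a joint PMF p on {0,1}^n whose marginals satisfy p_j(X_j = 0) > 1 - ε for all j, but the all-zeros vector (0,...,0) is not a maximizer of p, while it is the unique maximizer of the product of marginals. -/
open scoped BigOperators
open Finset

/-- Tightness of the threshold `ε ≤ 1/(n+1)`: for `1/(n+1) < ε ≤ 1/2`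
and `n ≥ 1`, there is a joint PMF `p` on `{0,1}^n` whose marginals put mass
`> 1 - ε` on `0` at every coordinate, yet the all-zeros vector is not a maximizer
of `p`, while it is the unique maximizer of the product of marginals. -/
theorem stmt_3 (n : ℕ) (hn : 1 ≤ n) (ε : ℝ)
    (hlow : 1 / ((n : ℝ) + 1) < ε) (hhigh : ε ≤ 1 / 2) :
    ∃ p : (Fin n → Fin 2) → ℝ,
      (∀ z, 0 ≤ p z) ∧ (∑ z : Fin n → Fin 2, p z = 1) ∧
      (∀ j : Fin n,
        (∑ z : Fin n → Fin 2, if z j = (0 : Fin 2) then p z else 0) > 1 - ε) ∧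
      (∃ z : Fin n → Fin 2, z ≠ (fun _ => 0) ∧ p z > p (fun _ => 0)) ∧
      (∀ z : Fin n → Fin 2, z ≠ (fun _ => 0) →
        (∏ j, ∑ w : Fin n → Fin 2, if w j = z j then p w else 0) <
        (∏ j, ∑ w : Fin n → Fin 2, if w j = (0 : Fin 2) then p w else 0)) := by
  classical
  set N : ℝ := (n : ℝ) with hNdef
  have hN1 : (1 : ℝ) ≤ N := by simp only [hNdef]; exact_mod_cast hn
  have hNpos : (0 : ℝ) < N := by linarith
  have hmin : 1 / (N + 1) < min ε (1 / N) := by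
    refine lt_min hlow ?_
    apply one_div_lt_one_div_of_lt hNpos (by linarith)
  set b : ℝ := (1 / (N + 1) + min ε (1 / N)) / 2 with hbdef
  have hb1 : 1 / (N + 1) < b := by simp only [hbdef]; linarith
  have hb2 : b < min ε (1 / N) := by simp only [hbdef]; linarith
  have hbε : b < ε := lt_of_lt_of_le hb2 (min_le_left _ _)
  have hbN : b < 1 / N := lt_of_lt_of_le hb2 (min_le_right _ _)
  have hbpos : 0 < b := lt_trans (by positivity) hb1
  have hbhalf : b < 1 / 2 := lt_of_lt_of_le hbε hhigh
  have hNb : N * b < 1 := by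
    have := (lt_div_iff₀ hNpos).mp hbN
    linarith [mul_comm N b]
  set a : ℝ := 1 - N * b with hadef
  have hapos : 0 < a := by simp only [hadef]; linarith
  have hab : a < b := by
    have h1 : 1 < b * (N + 1) := (div_lt_iff₀ (by linarith)).mp hb1
    simp only [hadef]; nlinarith
  -- basis vectors
  set e : Fin n → (Fin n → Fin 2) :=
    fun j => Function.update (fun _ => (0 : Fin 2)) j 1 with hedef
  have he_self : ∀ j, e j j = 1 := by
    intro j; simp [hedef]
  have he_other : ∀ i j, i ≠ j → e j i = 0 := by
    intro i j h; simp [hedef, Function.update_of_ne h]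
  have he_ne : ∀ j, e j ≠ (fun _ => (0 : Fin 2)) := by
    intro j h
    have := congrFun h j
    rw [he_self j] at this
    exact one_ne_zero this
  have he_inj : ∀ x ∈ (univ : Finset (Fin n)), ∀ y ∈ univ, e x = e y → x = y := by
    intro x _ y _ h
    by_contra hxy
    have := congrFun h x
    rw [he_self x, he_other x y hxy] at this
    exact one_ne_zero this
  set S : Finset (Fin n → Fin 2) := (univ : Finset (Fin n)).image e with hSdef
  have h0S : (fun _ => (0 : Fin 2)) ∉ S := by
    simp only [hSdef, mem_image]
    rintro ⟨j, -, hj⟩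
    exact he_ne j hj
  set p : (Fin n → Fin 2) → ℝ :=
    fun z => if z = (fun _ => (0 : Fin 2)) then a else if z ∈ S then b else 0 with hpdef
  have hp0 : p (fun _ => 0) = a := by simp [hpdef]
  have hpe : ∀ j, p (e j) = b := by
    intro j
    simp only [hpdef, if_neg (he_ne j)]
    rw [if_pos]
    simp only [hSdef, mem_image]
    exact ⟨j, mem_univ j, rfl⟩
  -- generic sum lemma
  have hsum : ∀ f : (Fin n → Fin 2) → ℝ,
      (∀ z, p z = 0 → f z = 0) →
      ∑ z : Fin n → Fin 2, f z = f (fun _ => 0) + ∑ j : Fin n, f (e j) := by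
    intro f hf
    rw [← Finset.sum_subset (Finset.subset_univ (insert (fun _ => (0:Fin 2)) S))]
    · rw [Finset.sum_insert h0S, hSdef, Finset.sum_image he_inj]
    · intro z _ hz
      apply hf
      simp only [Finset.mem_insert] at hz
      push_neg at hz
      simp [hpdef, hz.1, hz.2]
  have hpsum : ∑ z : Fin n → Fin 2, p z = 1 := by
    rw [hsum p (fun z h => h), hp0,
      Finset.sum_congr rfl (fun j (_ : j ∈ univ) => hpe j)]
    simp only [Finset.sum_const, Finset.card_univ, Fintype.card_fin, nsmul_eq_mul, hadef,
      ← hNdef]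
    ring
  -- marginals
  have haux : ∀ (j : Fin n) (c : ℝ),
      (∑ i : Fin n, if i = j then c else b) = N * b - b + c := by
    intro j c
    have : (fun i : Fin n => if i = j then c else b)
        = fun i => b + (if i = j then c - b else 0) := by
      funext i; split <;> ring
    rw [this, Finset.sum_add_distrib, Finset.sum_const, Finset.card_univ, Fintype.card_fin,
      Finset.sum_ite_eq' univ j (fun _ => c - b), if_pos (mem_univ j), nsmul_eq_mul, ← hNdef]
    ring
  have hmarg0 : ∀ j : Fin n,
      (∑ z : Fin n → Fin 2, if z j = (0 : Fin 2) then p z else 0) = 1 - b := by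
    intro j
    rw [hsum _ (fun z h => by simp [h])]
    have h1 : (∑ i : Fin n, if (e i) j = (0 : Fin 2) then p (e i) else 0)
        = ∑ i : Fin n, if i = j then 0 else b := by
      apply Finset.sum_congr rfl
      intro i _
      by_cases hij : i = j
      · rw [if_pos hij, hij, he_self]; simp
      · rw [he_other j i (Ne.symm hij), if_pos rfl, if_neg hij, hpe]
    rw [h1, haux j 0, if_pos rfl, hp0, hadef]
    ring
  have hmarg1 : ∀ j : Fin n,
      (∑ z : Fin n → Fin 2, if z j = (1 : Fin 2) then p z else 0) = b := by
    intro j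
    rw [hsum _ (fun z h => by simp [h])]
    have h1 : (∑ i : Fin n, if (e i) j = (1 : Fin 2) then p (e i) else 0)
        = ∑ i : Fin n, if i = j then b else 0 := by
      apply Finset.sum_congr rfl
      intro i _
      by_cases hij : i = j
      · rw [if_pos hij, hij, he_self, if_pos rfl, hpe]
      · rw [he_other j i (Ne.symm hij), if_neg hij]
        simp
    rw [h1, Finset.sum_ite_eq' univ j (fun _ => b), if_pos (mem_univ j)]
    simp
  refine ⟨p, ?_, hpsum, ?_, ?_, ?_⟩
  · intro z
    simp only [hpdef]
    split
    · exact le_of_lt hapos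
    · split
      · exact le_of_lt hbpos
      · exact le_refl 0
  · intro j
    rw [hmarg0 j]
    linarith
  · exact ⟨e ⟨0, hn⟩, he_ne _, by rw [hpe, hp0]; exact hab⟩
  · intro z hz
    have hm : ∀ j : Fin n,
        (∑ w : Fin n → Fin 2, if w j = z j then p w else 0)
          = if z j = 0 then 1 - b else b := by
      intro j
      have : z j = 0 ∨ z j = 1 := by omega
      rcases this with h | h <;> rw [h] <;> simp [hmarg0 j, hmarg1 j]
    rw [Finset.prod_congr rfl (fun j _ => hm j),
      Finset.prod_congr rfl (fun j (_ : j ∈ univ) => hmarg0 j)]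
    obtain ⟨j₀, hj₀⟩ : ∃ j, z j ≠ 0 := by
      by_contra h
      push_neg at h
      exact hz (funext h)
    apply Finset.prod_lt_prod (f := fun j => if z j = 0 then 1 - b else b)
    · intro i _
      split
      · linarith
      · exact hbpos
    · intro i _
      split
      · exact le_refl _
      · linarith
    · exact ⟨j₀, mem_univ j₀, by rw [if_neg hj₀]; linarith⟩
end

section
/- Let X = (X_1, ..., X_n) be random variables on a finite vocabulary V (n > 1, |V| ≥ 2) with joint PMF p and marginals p_j satisfying p_j(x*_j) > 1 - ε for all j with 0 < ε ≤ 1/2, and let q = ∏_j p_j. Then KL(p ‖ q) < (n - 1) · (H_b(ε) + ε ln(|V| - 1)). -/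
/-!
With `H` the Shannon entropy, `KL(p ‖ ∏ pⱼ) = ∑ⱼ H(pⱼ) - H(p)`, and `H(p) ≥ H(p₁)` because
`p z ≤ p₁ (z 1)`; so the divergence is at most `∑_{j ≥ 2} H(pⱼ)`. Each `H(pⱼ)` is bounded by
Fano's argument: apart from the atom `x*ⱼ`, Jensen for the concave `negMulLog` puts the remaining
mass `δ = 1 - pⱼ(x*ⱼ) < ε` uniformly on `|V| - 1` points, so `H(pⱼ) ≤ h_{|V|}(δ)` for the `|V|`-ary
entropy `h_{|V|}`, which is strictly increasing on `[0, 1 - 1/|V|] ⊇ [0, 1/2]`.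
-/

open scoped BigOperators Classical

/-- Marginal of the `j`-th coordinate of a joint PMF `p` on `V^n`. -/
noncomputable def margCoord {V : Type*} [Fintype V] {n : ℕ}
    (p : (Fin n → V) → ℝ) (j : Fin n) (v : V) : ℝ :=
  ∑ z : Fin n → V, if z j = v then p z else 0

/-- Kullback–Leibler divergence (in nats) between finitely supported
distributions. -/
noncomputable def klDiv' {A : Type*} [Fintype A] (f g : A → ℝ) : ℝ :=
  ∑ a : A, f a * Real.log (f a / g a)

open Real Finset

noncomputable def shannonEntropy {A : Type*} [Fintype A] (f : A → ℝ) : ℝ :=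
  ∑ a, negMulLog (f a)

lemma sum_negMulLog_le_card_mul_negMulLog_avg {ι : Type*} (s : Finset ι) {f : ι → ℝ}
    (hf : ∀ i ∈ s, 0 ≤ f i) :
    ∑ i ∈ s, negMulLog (f i) ≤ #s * negMulLog ((∑ i ∈ s, f i) / #s) := by
  rcases s.eq_empty_or_nonempty with rfl | hs
  · simp
  have hcard : (0 : ℝ) < #s := by exact_mod_cast hs.card_pos
  have hjensen := concaveOn_negMulLog.le_map_sum (t := s) (w := fun _ => (#s : ℝ)⁻¹) (p := f)
    (fun _ _ => by positivity) (by simp [hcard.ne']) hf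
  simp only [smul_eq_mul, inv_mul_eq_div, ← sum_div] at hjensen
  rwa [div_le_iff₀' hcard] at hjensen

lemma shannonEntropy_le_qaryEntropy {V : Type*} [Fintype V] (hcard : 2 ≤ Fintype.card V)
    {f : V → ℝ} (hf0 : ∀ v, 0 ≤ f v) (hf1 : ∑ v, f v = 1) (x : V) :
    shannonEntropy f ≤ qaryEntropy (Fintype.card V) (1 - f x) := by
  set δ := 1 - f x
  have hrest : ∑ v ∈ univ.erase x, f v = δ := by
    linarith [add_sum_erase univ f (mem_univ x)]
  have hcard_rest : ((#(univ.erase x) : ℕ) : ℝ) = Fintype.card V - 1 := by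
    rw [card_erase_of_mem (mem_univ x), card_univ, Nat.cast_pred (by omega)]
  have hM : (0 : ℝ) < Fintype.card V - 1 := by
    have : (2 : ℝ) ≤ Fintype.card V := by exact_mod_cast hcard
    linarith
  have hjensen := sum_negMulLog_le_card_mul_negMulLog_avg (univ.erase x) (fun v _ => hf0 v)
  have hscale : (Fintype.card V - 1 : ℝ) * negMulLog (δ / (Fintype.card V - 1)) =
      negMulLog δ + δ * log (Fintype.card V - 1) := by
    rw [div_eq_mul_inv, negMulLog_mul]
    simp only [negMulLog, log_inv]
    field_simp
  rw [hrest, hcard_rest, hscale] at hjensen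
  have hq : qaryEntropy (Fintype.card V) δ =
      negMulLog (f x) + negMulLog δ + δ * log (Fintype.card V - 1) := by
    rw [qaryEntropy, binEntropy_eq_negMulLog_add_negMulLog_one_sub, sub_sub_cancel]
    push_cast; ring
  rw [shannonEntropy, ← add_sum_erase _ _ (mem_univ x), hq]
  linarith

lemma shannonEntropy_lt_qaryEntropy {V : Type*} [Fintype V] (hcard : 2 ≤ Fintype.card V)
    {f : V → ℝ} (hf0 : ∀ v, 0 ≤ f v) (hf1 : ∑ v, f v = 1) {x : V} {ε : ℝ}
    (hε : ε ≤ 1 - 1 / Fintype.card V) (hx : 1 - ε < f x) :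
    shannonEntropy f < qaryEntropy (Fintype.card V) ε := by
  have hx1 : f x ≤ 1 := hf1 ▸ single_le_sum (fun v _ => hf0 v) (mem_univ x)
  calc shannonEntropy f ≤ qaryEntropy (Fintype.card V) (1 - f x) :=
        shannonEntropy_le_qaryEntropy hcard hf0 hf1 x
    _ < qaryEntropy (Fintype.card V) ε :=
        qaryEntropy_strictMonoOn hcard ⟨by linarith, by linarith⟩ ⟨by linarith, hε⟩ (by linarith)

namespace margCoord

variable {V : Type*} [Fintype V] {n : ℕ} (p : (Fin n → V) → ℝ)

lemma nonneg (hp : ∀ z, 0 ≤ p z) (j : Fin n) (v : V) : 0 ≤ margCoord p j v :=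
  sum_nonneg fun z _ => by split_ifs <;> simp [hp z]

lemma sum_eq (j : Fin n) : ∑ v, margCoord p j v = ∑ z, p z := by
  simp only [margCoord]
  rw [sum_comm]
  simp

lemma apply_le (hp : ∀ z, 0 ≤ p z) (j : Fin n) (z : Fin n → V) : p z ≤ margCoord p j (z j) := by
  unfold margCoord
  simpa using single_le_sum (f := fun w : Fin n → V => if w j = z j then p w else 0)
    (fun w _ => by split_ifs <;> simp [hp w]) (mem_univ z)

lemma sum_mul_comp_eq (j : Fin n) (g : V → ℝ) :
    ∑ z, p z * g (z j) = ∑ v, margCoord p j v * g v := by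
  simp only [margCoord, sum_mul, ite_mul, zero_mul]
  rw [sum_comm]
  simp

lemma sum_mul_log_comp (j : Fin n) :
    ∑ z, p z * log (margCoord p j (z j)) = -shannonEntropy (margCoord p j) := by
  simp only [shannonEntropy, negMulLog, neg_mul, sum_neg_distrib, neg_neg]
  exact sum_mul_comp_eq p j fun v => log (margCoord p j v)

lemma shannonEntropy_le (hp : ∀ z, 0 ≤ p z) (j : Fin n) :
    shannonEntropy (margCoord p j) ≤ shannonEntropy p := by
  rw [← neg_neg (shannonEntropy (margCoord p j)), ← sum_mul_log_comp, ← sum_neg_distrib]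
  refine sum_le_sum fun z _ => ?_
  rcases (hp z).eq_or_lt with hz | hz
  · simp [← hz]
  · rw [negMulLog, neg_mul, neg_le_neg_iff]
    exact mul_le_mul_of_nonneg_left (log_le_log hz (apply_le p hp j z)) hz.le

lemma klDiv'_prod_eq (hp : ∀ z, 0 ≤ p z) :
    klDiv' p (fun z => ∏ j, margCoord p j (z j)) =
      ∑ j, shannonEntropy (margCoord p j) - shannonEntropy p := by
  have hterm : ∀ z, p z * log (p z / ∏ j, margCoord p j (z j)) =
      -negMulLog (p z) - ∑ j, p z * log (margCoord p j (z j)) := by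
    intro z
    rcases (hp z).eq_or_lt with hz | hz
    · simp [← hz]
    have hmarg : ∀ j, margCoord p j (z j) ≠ 0 := fun j => (hz.trans_le (apply_le p hp j z)).ne'
    rw [log_div hz.ne' (prod_ne_zero_iff.2 fun j _ => hmarg j), log_prod fun j _ => hmarg j,
      negMulLog, mul_sub, mul_sum]
    ring
  simp only [klDiv', hterm, sum_sub_distrib, sum_neg_distrib]
  rw [sum_comm]
  simp only [sum_mul_log_comp, sum_neg_distrib, shannonEntropy]
  ring

end margCoord

theorem stmt_10_general {V : Type*} [Fintype V] {n : ℕ} (hn : 1 < n)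
    (hcard : 2 ≤ Fintype.card V)
    (p : (Fin n → V) → ℝ) (x' : Fin n → V) (ε : ℝ)
    (hp0 : ∀ z, 0 ≤ p z) (hp1 : ∑ z : Fin n → V, p z = 1)
    (hconf : ∀ j, margCoord p j (x' j) > 1 - ε)
    (hε2 : ε ≤ 1 / 2) :
    klDiv' p (fun z => ∏ j, margCoord p j (z j)) <
      ((n : ℝ) - 1) *
        ((-(ε * Real.log ε) - (1 - ε) * Real.log (1 - ε)) +
          ε * Real.log ((Fintype.card V : ℝ) - 1)) := by
  have hε_le : ε ≤ 1 - 1 / Fintype.card V := by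
    have : (2 : ℝ) ≤ Fintype.card V := by exact_mod_cast hcard
    have : 1 / (Fintype.card V : ℝ) ≤ 1 / 2 := one_div_le_one_div_of_le two_pos this
    linarith
  have hmarg_lt (j : Fin n) : shannonEntropy (margCoord p j) < qaryEntropy (Fintype.card V) ε :=
    shannonEntropy_lt_qaryEntropy hcard (margCoord.nonneg p hp0 j)
      ((margCoord.sum_eq p j).trans hp1) hε_le (hconf j)
  have hq : qaryEntropy (Fintype.card V) ε = -(ε * log ε) - (1 - ε) * log (1 - ε) +
      ε * log ((Fintype.card V : ℝ) - 1) := by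
    simp only [qaryEntropy, binEntropy, log_inv]
    push_cast
    ring
  let j₀ : Fin n := ⟨0, by omega⟩
  have hrest : ∑ j ∈ univ.erase j₀, shannonEntropy (margCoord p j) <
      ((n : ℝ) - 1) * qaryEntropy (Fintype.card V) ε := by
    calc _ < ∑ j ∈ univ.erase j₀, qaryEntropy (Fintype.card V) ε :=
          sum_lt_sum_of_nonempty
            (one_lt_card_iff_nontrivial.1 (by simpa using hn)).erase_nonempty fun j _ => hmarg_lt j
      _ = _ := by simp [card_erase_of_mem, Nat.cast_pred (by omega : 0 < n)]
  rw [margCoord.klDiv'_prod_eq p hp0, ← add_sum_erase _ _ (mem_univ j₀), ← hq]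
  linarith [margCoord.shannonEntropy_le p hp0 j₀]

/-- For `n > 1`, `|V| ≥ 2`, under the high-confidence assumption
`p_j(x*_j) > 1 - ε` with `0 < ε ≤ 1/2`, the forward KL divergence between the
joint and the product of marginals satisfies
`KL(p ‖ q) < (n-1)·(H_b(ε) + ε ln(|V|-1))`. -/
theorem stmt_10 {V : Type*} [Fintype V] {n : ℕ} (hn : 1 < n)
    (hcard : 2 ≤ Fintype.card V)
    (p : (Fin n → V) → ℝ) (x' : Fin n → V) (ε : ℝ)
    (hp0 : ∀ z, 0 ≤ p z) (hp1 : ∑ z : Fin n → V, p z = 1)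
    (hconf : ∀ j, margCoord p j (x' j) > 1 - ε)
    (hε : 0 < ε) (hε2 : ε ≤ 1 / 2) :
    klDiv' p (fun z => ∏ j, margCoord p j (z j)) <
      ((n : ℝ) - 1) *
        ((-(ε * Real.log ε) - (1 - ε) * Real.log (1 - ε)) +
          ε * Real.log ((Fintype.card V : ℝ) - 1)) :=
  stmt_10_general hn hcard p x' ε hp0 hp1 hconf hε2
end
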